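/- Let (X,d) be a metric space, let φ : X → ℝ∪{−∞} be c-concave, and let B ⊂ X be a bounded set such that ∂^cφ(x) ∩ B ≠ ∅ for every x ∈ X. Then φ is real-valued and satisfies φ(x) ≥ d(x,B)²/2 − sup_{y∈B} φ^c(y) for every x ∈ X (where sup_B φ^c is finite); in particular φ is bounded from below and all its sublevel sets {φ ≤ r} are bounded. -/
import Mathlib


open Filter MeasureTheory Set Topology

/-- The `c`-transform for the cost `c(x,y) = d²(x,y)/2`:
`φᶜ(y) = inf_x ( d²(x,y)/2 - φ(x) )`, with values in `EReal`. -/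
noncomputable def cTransform {X : Type*} [MetricSpace X] (φ : X → EReal) (y : X) : EReal :=
  ⨅ x : X, ((dist x y ^ 2 / 2 : ℝ) : EReal) - φ x

/-- A function `φ : X → ℝ ∪ {-∞}` is `c`-concave if it is not identically `-∞` and
`φ = ψᶜ` for some `ψ : X → ℝ ∪ {-∞}`. -/
def CConcave {X : Type*} [MetricSpace X] (φ : X → EReal) : Prop :=
  (∃ x, φ x ≠ ⊥) ∧ (∀ x, φ x ≠ ⊤) ∧ ∃ ψ : X → EReal, (∀ x, ψ x ≠ ⊤) ∧ φ = cTransform ψ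

/-- The `c`-superdifferential of `φ` at `x`: the set of `y` with `φ(x) + φᶜ(y) = d²(x,y)/2`. -/
def cSuperdiff {X : Type*} [MetricSpace X] (φ : X → EReal) (x : X) : Set X :=
  {y | φ x + cTransform φ y = ((dist x y ^ 2 / 2 : ℝ) : EReal)}

/-- Let `φ` be `c`-concave and `B` bounded with `∂ᶜφ(x) ∩ B ≠ ∅` for every `x`.
Then `φ` is real-valued and `φ(x) ≥ d(x,B)²/2 - sup_B φᶜ` (the sup being finite); in particular
`φ` is bounded from below and all its sublevel sets are bounded. -/
theorem stmt6 {X : Type*} [MetricSpace X] (φ : X → EReal) (hφ : CConcave φ)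
    (B : Set X) (hB : Bornology.IsBounded B)
    (hsup : ∀ x : X, (cSuperdiff φ x ∩ B).Nonempty) :
    (∀ x, ∃ r : ℝ, φ x = (r : EReal)) ∧
    (⨆ y ∈ B, cTransform φ y) < ⊤ ∧
    (∀ x : X, ((Metric.infDist x B ^ 2 / 2 : ℝ) : EReal) - (⨆ y ∈ B, cTransform φ y) ≤ φ x) ∧
    (∃ m : ℝ, ∀ x, (m : EReal) ≤ φ x) ∧
    (∀ r : ℝ, Bornology.IsBounded {x : X | φ x ≤ (r : EReal)}) := by
  obtain ⟨⟨x₀, hx₀⟩, htop, _⟩ := hφ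
  -- the c-transform is never ⊤
  have hct_ne_top : ∀ y, cTransform φ y ≠ ⊤ := by
    intro y h
    have h1 : cTransform φ y ≤ ((dist x₀ y ^ 2 / 2 : ℝ) : EReal) - φ x₀ := iInf_le _ x₀
    rw [h, top_le_iff] at h1
    rw [← EReal.coe_toReal (htop x₀) hx₀, ← EReal.coe_sub] at h1
    exact EReal.coe_ne_top _ h1
  -- φ is never ⊥
  have hbot : ∀ x, φ x ≠ ⊥ := by
    intro x hx
    obtain ⟨y, hy, hyB⟩ := hsup x
    have hy' : φ x + cTransform φ y = ((dist x y ^ 2 / 2 : ℝ) : EReal) := hy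
    rw [hx, EReal.bot_add] at hy'
    exact (EReal.bot_ne_coe _) hy'
  set f : X → ℝ := fun x => (φ x).toReal with hf_def
  have hf : ∀ x, φ x = ((f x : ℝ) : EReal) := fun x =>
    (EReal.coe_toReal (htop x) (hbot x)).symm
  -- the c-transform at any point of a superdifferential is real
  have hct_ne_bot : ∀ x y, y ∈ cSuperdiff φ x → cTransform φ y ≠ ⊥ := by
    intro x y hy hbot'
    have hy' : φ x + cTransform φ y = ((dist x y ^ 2 / 2 : ℝ) : EReal) := hy
    rw [hbot', EReal.add_bot] at hy'
    exact (EReal.bot_ne_coe _) hy'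
  set S : EReal := ⨆ y ∈ B, cTransform φ y with hS_def
  -- bound B in a closed ball around x₀
  obtain ⟨D, hD⟩ := hB.subset_closedBall x₀
  -- S is not ⊤
  have hS_le : S ≤ ((D ^ 2 / 2 - f x₀ : ℝ) : EReal) := by
    refine iSup₂_le fun y hyB => ?_
    have h1 : cTransform φ y ≤ ((dist x₀ y ^ 2 / 2 : ℝ) : EReal) - φ x₀ := iInf_le _ x₀
    refine h1.trans ?_
    rw [hf x₀, ← EReal.coe_sub]
    apply EReal.coe_le_coe_iff.mpr
    have hdy : dist x₀ y ≤ D := by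
      have := hD hyB; rw [Metric.mem_closedBall] at this
      rwa [dist_comm]
    have : dist x₀ y ^ 2 ≤ D ^ 2 := pow_le_pow_left₀ dist_nonneg hdy 2
    linarith
  have hS_ne_top : S ≠ ⊤ := fun h => by
    rw [h, top_le_iff] at hS_le; exact EReal.coe_ne_top _ hS_le
  -- S is not ⊥
  have hS_ne_bot : S ≠ ⊥ := by
    obtain ⟨y₁, hy₁, hy₁B⟩ := hsup x₀
    intro h
    have h1 : cTransform φ y₁ ≤ S := le_iSup₂ (f := fun y _ => cTransform φ y) y₁ hy₁B
    rw [h, le_bot_iff] at h1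
    exact hct_ne_bot _ _ hy₁ h1
  set s : ℝ := S.toReal with hs_def
  have hS : S = ((s : ℝ) : EReal) := (EReal.coe_toReal hS_ne_top hS_ne_bot).symm
  -- key real-valued facts at any x via a chosen y
  have key : ∀ x, ∃ y ∈ B, f x + (cTransform φ y).toReal = dist x y ^ 2 / 2 ∧
      (cTransform φ y).toReal ≤ s := by
    intro x
    obtain ⟨y, hy, hyB⟩ := hsup x
    refine ⟨y, hyB, ?_, ?_⟩
    · have hy' : φ x + cTransform φ y = ((dist x y ^ 2 / 2 : ℝ) : EReal) := hy
      rw [hf x, ← EReal.coe_toReal (hct_ne_top y) (hct_ne_bot x y hy),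
        ← EReal.coe_add] at hy'
      exact_mod_cast hy'
    · have h1 : cTransform φ y ≤ S := le_iSup₂ (f := fun y _ => cTransform φ y) y hyB
      rw [← EReal.coe_toReal (hct_ne_top y) (hct_ne_bot x y hy), hS] at h1
      exact_mod_cast h1
  refine ⟨fun x => ⟨f x, hf x⟩, lt_of_le_of_lt hS_le (EReal.coe_lt_top _), ?_, ?_, ?_⟩
  · -- main inequality
    intro x
    obtain ⟨y, hyB, hsum, hts⟩ := key x
    rw [hS, hf x, ← EReal.coe_sub]
    apply EReal.coe_le_coe_iff.mpr
    have h1 : Metric.infDist x B ≤ dist x y := Metric.infDist_le_dist_of_mem hyB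
    have h2 : Metric.infDist x B ^ 2 ≤ dist x y ^ 2 :=
      pow_le_pow_left₀ Metric.infDist_nonneg h1 2
    nlinarith [hsum]
  · -- bounded below
    refine ⟨-s, fun x => ?_⟩
    obtain ⟨y, hyB, hsum, hts⟩ := key x
    rw [hf x]
    apply EReal.coe_le_coe_iff.mpr
    nlinarith [sq_nonneg (dist x y)]
  · -- sublevel sets bounded
    intro r
    refine (Metric.isBounded_closedBall
      (x := x₀) (r := Real.sqrt (2 * (r + s)) + D)).subset ?_
    intro x hx
    have hxr : f x ≤ r := by
      have hx' : φ x ≤ (r : EReal) := hx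
      rw [hf x] at hx'; exact_mod_cast hx'
    obtain ⟨y, hyB, hsum, hts⟩ := key x
    have hdy : dist x y ^ 2 ≤ 2 * (r + s) := by nlinarith
    have hdy' : dist x y ≤ Real.sqrt (2 * (r + s)) := by
      rw [← Real.sqrt_sq (dist_nonneg (x := x) (y := y))]
      exact Real.sqrt_le_sqrt hdy
    have hyD : dist y x₀ ≤ D := hD hyB
    rw [Metric.mem_closedBall]
    calc dist x x₀ ≤ dist x y + dist y x₀ := dist_triangle x y x₀
      _ ≤ Real.sqrt (2 * (r + s)) + D := add_le_add hdy' hyD
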